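/- arXiv:2105.12619 — 2 statements merged into one kernel-verified Lean document; each statement's English description precedes it below -/
import Mathlib

section
/- There exists a constant C₃ > 0 such that for every α ∈ (0,1) and every s ∈ (0,1) one has C₃ · log s ≤ ∫_1^s (1/S_α(σ)) dσ ≤ 0 (note that log s < 0 for s ∈ (0,1), so the left-hand side is negative). -/
/-!
For σ ∈ (0, 1] and α ∈ [0, 1] the factor (1 + α(σ + 1))^q is at most 3 and, since q ≤ 1,
(σ + 1)^(q - 1) ≥ 2^(q - 1). Hence 1 / S_α(σ) ≤ 3 / (χ 2^(q - 1) σ) uniformly in α, and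
integrating over [s, 1] gives the logarithmic lower bound; the upper bound is positivity of S_α.
-/

open Real Set MeasureTheory

noncomputable def S (χ q α s : ℝ) : ℝ := χ * s * (s + 1) ^ (q - 1) / (1 + α * (s + 1)) ^ q

section

variable {χ q α : ℝ}

lemma S_pos (hχ : 0 < χ) (hα : 0 ≤ α) {s : ℝ} (hs : 0 < s) : 0 < S χ q α s := by
  unfold S
  have : 0 < 1 + α * (s + 1) := by positivity
  positivity

lemma continuousAt_S (hα : 0 ≤ α) {s : ℝ} (hs : 0 < s) : ContinuousAt (S χ q α) s := by
  have h₁ : 0 < s + 1 := by positivity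
  have h₂ : 0 < 1 + α * (s + 1) := by positivity
  unfold S
  exact ((continuousAt_const.mul continuousAt_id).mul
    ((continuousAt_id.add continuousAt_const).rpow_const (Or.inl h₁.ne'))).div
    ((continuousAt_const.add (continuousAt_const.mul
      (continuousAt_id.add continuousAt_const))).rpow_const (Or.inl h₂.ne'))
    (rpow_pos_of_pos h₂ q).ne'

lemma intervalIntegrable_one_div_S (hχ : 0 < χ) (hα : 0 ≤ α) {a b : ℝ} (ha : 0 < a)
    (hb : 0 < b) : IntervalIntegrable (fun σ => 1 / S χ q α σ) volume a b := by
  refine ContinuousOn.intervalIntegrable fun σ hσ => ?_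
  have hσ0 : 0 < σ := lt_of_lt_of_le (lt_min ha hb) hσ.1
  exact (continuousAt_const.div (continuousAt_S hα hσ0)
    (S_pos hχ hα hσ0).ne').continuousWithinAt

lemma one_div_S_le (hχ : 0 < χ) (hq : q ≤ 1) (hα₀ : 0 ≤ α) (hα₁ : α ≤ 1) {σ : ℝ}
    (hσ₀ : 0 < σ) (hσ₁ : σ ≤ 1) : 1 / S χ q α σ ≤ 3 / (χ * 2 ^ (q - 1)) * (1 / σ) := by
  have hM₁ : 1 ≤ 1 + α * (σ + 1) := by nlinarith
  have hnum : (1 + α * (σ + 1)) ^ q ≤ 3 :=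
    calc (1 + α * (σ + 1)) ^ q ≤ (1 + α * (σ + 1)) ^ (1 : ℝ) :=
          rpow_le_rpow_of_exponent_le hM₁ hq
      _ ≤ 3 := by rw [rpow_one]; nlinarith
  have hden : 2 ^ (q - 1) ≤ (σ + 1) ^ (q - 1) :=
    rpow_le_rpow_of_nonpos (by positivity) (by linarith) (by linarith)
  have h2 : (0 : ℝ) < 2 ^ (q - 1) := by positivity
  rw [S, one_div_div, div_mul_div_comm, mul_one, mul_right_comm]
  gcongr

lemma mul_log_le_integral_one_of_le {f : ℝ → ℝ} {C s : ℝ} (hs₀ : 0 < s) (hs₁ : s ≤ 1)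
    (hf : IntervalIntegrable f volume s 1) (hfC : ∀ σ ∈ Icc s 1, f σ ≤ C * (1 / σ)) :
    C * log s ≤ ∫ σ in (1 : ℝ)..s, f σ := by
  have h0 : (0 : ℝ) ∉ uIcc s 1 := by
    rw [uIcc_of_le hs₁]; exact fun h => hs₀.not_ge h.1
  have hlog : ∫ σ in s..(1 : ℝ), C * (1 / σ) = -(C * log s) := by
    rw [intervalIntegral.integral_const_mul, integral_one_div h0, one_div, log_inv]; ring
  have hmono := intervalIntegral.integral_mono_on hs₁ hf
    ((intervalIntegral.intervalIntegrable_one_div (fun x hx => ne_of_mem_of_not_mem hx h0)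
      continuousOn_id).const_mul C) hfC
  rw [intervalIntegral.integral_symm]
  linarith

end

theorem stmt3 (χ q : ℝ) (hχ : 0 < χ) (hq : q ≤ 1) :
    ∃ C₃ > (0:ℝ), ∀ α ∈ Set.Ioo (0:ℝ) 1, ∀ s ∈ Set.Ioo (0:ℝ) 1,
      C₃ * Real.log s ≤
        (∫ σ in (1:ℝ)..s, 1 / (χ * σ * (σ + 1) ^ (q - 1) / (1 + α * (σ + 1)) ^ q)) ∧
      (∫ σ in (1:ℝ)..s, 1 / (χ * σ * (σ + 1) ^ (q - 1) / (1 + α * (σ + 1)) ^ q)) ≤ 0 := by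
  refine ⟨3 / (χ * 2 ^ (q - 1)), by positivity, fun α ⟨hα₀, hα₁⟩ s ⟨hs₀, hs₁⟩ => ⟨?_, ?_⟩⟩
  · exact mul_log_le_integral_one_of_le hs₀ hs₁.le
      (intervalIntegrable_one_div_S hχ hα₀.le hs₀ one_pos)
      fun σ hσ => one_div_S_le hχ hq hα₀.le hα₁.le (hs₀.trans_le hσ.1) hσ.2
  · rw [intervalIntegral.integral_symm, neg_nonpos]
    exact intervalIntegral.integral_nonneg hs₁.le fun σ hσ =>
      (one_div_pos.2 (S_pos (q := q) hχ hα₀.le (hs₀.trans_le hσ.1))).le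
end

section
/- Let q ≤ 1 be real. For every s ≥ 1 one has ∫_1^s ∫_1^ρ (σ+1)^(1−q)/σ dσ dρ ≤ (2^(1−q) / ((2−q)·D_q)) · s^(2−q) · L_q(s), where D_q := 1 − q if q < 1 and D_q := 1 if q = 1. -/
open Real

/-
Since σ + 1 ≤ 2σ on [1, ∞), the inner integral is at most 2^(1-q) ∫₁^ρ σ^(-q) dσ, which is
(ρ^(1-q) - 1)/(1 - q) ≤ ρ^(1-q)/(1 - q) for q < 1 and log ρ ≤ log s for q = 1. Integrating ρ^(1-q)
over [1, s] then contributes the factor s^(2-q)/(2 - q).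
-/

open Set intervalIntegral

theorem integral_one_rpow_le {r : ℝ} (hr : -1 < r) (s : ℝ) :
    ∫ x in (1:ℝ)..s, x ^ r ≤ s ^ (r + 1) / (r + 1) := by
  rw [integral_rpow (Or.inl hr), one_rpow]
  gcongr <;> linarith

theorem integral_one_rpow_neg_le {q ρ : ℝ} (hq : q ≤ 1) (hρ : 0 < ρ) :
    ∫ σ in (1:ℝ)..ρ, σ ^ (-q) ≤
      ρ ^ (1 - q) * (if q < 1 then 1 else log ρ) / (if q < 1 then 1 - q else 1) := by
  rcases hq.lt_or_eq with hq | rfl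
  · simpa [hq, sub_eq_neg_add] using integral_one_rpow_le (r := -q) (by linarith) ρ
  · simp [rpow_neg_one, integral_inv_of_pos one_pos hρ]

theorem continuousOn_add_one_rpow_div (p : ℝ) :
    ContinuousOn (fun σ : ℝ => (σ + 1) ^ p / σ) (Ioi 0) := fun σ (hσ : 0 < σ) => by
  fun_prop (disch := first | positivity | exact Or.inl (by positivity))

theorem uIcc_one_subset_Ioi_zero {ρ : ℝ} (hρ : 0 < ρ) : uIcc 1 ρ ⊆ Ioi 0 :=
  fun _ hσ => lt_of_lt_of_le (lt_min one_pos hρ) hσ.1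

theorem integral_add_one_rpow_div_le {q ρ : ℝ} (hq : q ≤ 1) (hρ : 1 ≤ ρ) :
    ∫ σ in (1:ℝ)..ρ, (σ + 1) ^ (1 - q) / σ ≤ 2 ^ (1 - q) * ∫ σ in (1:ℝ)..ρ, σ ^ (-q) := by
  have hle : ∀ σ ∈ Icc 1 ρ, (σ + 1) ^ (1 - q) / σ ≤ 2 ^ (1 - q) * σ ^ (-q) := fun σ hσ => by
    have hσ0 : 0 < σ := by linarith [hσ.1]
    calc (σ + 1) ^ (1 - q) / σ ≤ (2 * σ) ^ (1 - q) / σ := by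
          gcongr
          linarith [hσ.1]
      _ = 2 ^ (1 - q) * σ ^ (-q) := by
          rw [mul_rpow zero_le_two hσ0.le, mul_div_assoc, ← rpow_sub_one hσ0.ne',
            sub_sub_cancel_left]
  have hsub := uIcc_one_subset_Ioi_zero (by linarith : 0 < ρ)
  rw [← integral_const_mul]
  refine integral_mono_on hρ ((continuousOn_add_one_rpow_div _).mono hsub).intervalIntegrable
    (ContinuousOn.intervalIntegrable fun σ hσ => ?_) hle
  have : 0 < σ := hsub hσ
  fun_prop (disch := exact Or.inl this.ne')

theorem integral_add_one_rpow_div_le_rpow {q ρ s : ℝ} (hq : q ≤ 1) (hρ : ρ ∈ Icc 1 s) :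
    ∫ σ in (1:ℝ)..ρ, (σ + 1) ^ (1 - q) / σ ≤
      2 ^ (1 - q) * (if q < 1 then 1 else log s) / (if q < 1 then 1 - q else 1) * ρ ^ (1 - q) := by
  have hρ0 : 0 < ρ := by linarith [hρ.1]
  have hlog : (if q < 1 then 1 else log ρ) ≤ if q < 1 then 1 else log s := by
    split_ifs
    exacts [le_rfl, log_le_log hρ0 hρ.2]
  have hD : 0 < if q < 1 then 1 - q else 1 := by split_ifs <;> linarith
  calc _ ≤ 2 ^ (1 - q) * ∫ σ in (1:ℝ)..ρ, σ ^ (-q) := integral_add_one_rpow_div_le hq hρ.1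
    _ ≤ 2 ^ (1 - q) * (ρ ^ (1 - q) * (if q < 1 then 1 else log ρ) /
          (if q < 1 then 1 - q else 1)) := by
        gcongr
        exact integral_one_rpow_neg_le hq hρ0
    _ ≤ 2 ^ (1 - q) * (ρ ^ (1 - q) * (if q < 1 then 1 else log s) /
          (if q < 1 then 1 - q else 1)) := by gcongr
    _ = _ := by ring

theorem stmt5 (q : ℝ) (hq : q ≤ 1) :
    ∀ s ≥ (1:ℝ),
      (∫ ρ in (1:ℝ)..s, ∫ σ in (1:ℝ)..ρ, (σ + 1) ^ (1 - q) / σ) ≤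
        ((2:ℝ) ^ (1 - q) / ((2 - q) * (if q < 1 then 1 - q else 1))) * s ^ (2 - q) *
          (if q < 1 then 1 else Real.log s) := by
  intro s hs
  set L := if q < 1 then 1 else log s with hL
  set D : ℝ := if q < 1 then 1 - q else 1 with hD
  have hL0 : 0 ≤ L := by rw [hL]; split_ifs <;> simp [log_nonneg hs]
  have hD0 : 0 < D := by rw [hD]; split_ifs <;> linarith
  have hf := (continuousOn_add_one_rpow_div (1 - q)).mono
    (uIcc_one_subset_Ioi_zero (by linarith : (0:ℝ) < s))
  calc _ ≤ ∫ ρ in (1:ℝ)..s, 2 ^ (1 - q) * L / D * ρ ^ (1 - q) :=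
        integral_mono_on hs
          (continuousOn_primitive_interval hf.integrableOn_uIcc).intervalIntegrable
          ((intervalIntegrable_rpow' (by linarith)).const_mul _)
          fun ρ hρ => integral_add_one_rpow_div_le_rpow hq hρ
    _ = 2 ^ (1 - q) * L / D * ∫ ρ in (1:ℝ)..s, ρ ^ (1 - q) := integral_const_mul _ _
    _ ≤ 2 ^ (1 - q) * L / D * (s ^ (1 - q + 1) / (1 - q + 1)) := by
        gcongr
        exact integral_one_rpow_le (by linarith) s
    _ = _ := by rw [show 1 - q + 1 = 2 - q by ring]; field_simp
end
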